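/- arXiv:0802.1780 — 3 statements merged into one kernel-verified Lean document; each statement's English description precedes it below -/
import Mathlib

section
/- In the setting of the previous telescoping identity, assume additionally: N_s := S \ F̃^{-N}(Ñ_u) satisfies N_s ⊆ Ñ_s, N_u := S \ F̃^N(Ñ_s) satisfies N_u ⊆ Ñ_u, and N_s ∩ N_u = ∅. Then m̃(F̃(ξ)) − m̃(ξ) ≤ 0 for all ξ ∈ S, and moreover m̃(F̃(ξ)) − m̃(ξ) = (u−s)/(2N) < 0 for all ξ ∉ (N_u ∪ N_s). -/
open Finset

/-- (Decrease of the averaged order function along `F̃`.)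
In the setting of the telescoping identity, if moreover
`N_s := S \ F̃^{-N}(Ñ_u) ⊆ Ñ_s`, `N_u := S \ F̃^{N}(Ñ_s) ⊆ Ñ_u` and `N_s ∩ N_u = ∅`,
then `m̃(F̃ ξ) − m̃(ξ) ≤ 0` for all `ξ ∈ S`, and
`m̃(F̃ ξ) − m̃(ξ) = (u−s)/(2N) < 0` for all `ξ ∉ N_u ∪ N_s`. -/
theorem stmt4
    {S : Type*} [MetricSpace S] [CompactSpace S]
    (F : S ≃ S) (hF : Continuous F) (hFsymm : Continuous F.symm)
    (Nts Ntu : Set S) (hNts : IsOpen Nts) (hNtu : IsOpen Ntu)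
    (hNtsinv : ∀ ξ ∈ Nts, F.symm ξ ∈ Nts) (hNtuinv : ∀ ξ ∈ Ntu, F ξ ∈ Ntu)
    (u s : ℝ) (hu : u < 0) (hs : 0 < s)
    (m₀ : S → ℝ) (hm₀ : Continuous m₀) (hm₀range : ∀ ξ, m₀ ξ ∈ Set.Icc u s)
    (hm₀s : ∀ ξ ∈ Nts, m₀ ξ = s) (hm₀u : ∀ ξ ∈ Ntu, m₀ ξ = u)
    (N : ℕ) (hN : 0 < N)
    (mt : S → ℝ)
    (hmt : ∀ ξ, mt ξ =
      (1 / (2 * (N : ℝ))) * ∑ k ∈ Finset.range (2 * N),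
        m₀ (((F : Equiv.Perm S) ^ ((k : ℤ) - (N : ℤ))) ξ))
    (Ns Nu : Set S)
    (hNs : Ns = Set.univ \ (((F : Equiv.Perm S) ^ (-(N : ℤ))) '' Ntu))
    (hNu : Nu = Set.univ \ (((F : Equiv.Perm S) ^ (N : ℤ)) '' Nts))
    (hNsSub : Ns ⊆ Nts) (hNuSub : Nu ⊆ Ntu) (hdisj : Ns ∩ Nu = ∅) :
    (∀ ξ : S, mt (F ξ) - mt ξ ≤ 0) ∧
    (∀ ξ : S, ξ ∉ Nu ∪ Ns → mt (F ξ) - mt ξ = (u - s) / (2 * (N : ℝ))) ∧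
    (u - s) / (2 * (N : ℝ)) < 0 := by
  set G : Equiv.Perm S := (F : Equiv.Perm S) with hG
  have hback : ∀ (n : ℕ) (ξ : S), ξ ∈ Nts → (G ^ (-(n : ℤ))) ξ ∈ Nts := by
    intro n
    induction n with
    | zero => intro ξ hξ; simpa using hξ
    | succ n ih =>
      intro ξ hξ
      have h1 : (G ^ (-((n + 1 : ℕ) : ℤ))) ξ = (G ^ (-(n : ℤ))) (F.symm ξ) := by
        have he : (-((n + 1 : ℕ) : ℤ)) = (-(n : ℤ)) + (-1) := by push_cast; ring
        rw [he, zpow_add, Equiv.Perm.mul_apply, zpow_neg_one]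
        rfl
      rw [h1]; exact ih _ (hNtsinv ξ hξ)
  have hfwd : ∀ (n : ℕ) (ξ : S), ξ ∈ Ntu → (G ^ (n : ℤ)) ξ ∈ Ntu := by
    intro n
    induction n with
    | zero => intro ξ hξ; simpa using hξ
    | succ n ih =>
      intro ξ hξ
      have h1 : (G ^ ((n + 1 : ℕ) : ℤ)) ξ = (G ^ (n : ℤ)) (F ξ) := by
        have he : ((n + 1 : ℕ) : ℤ) = (n : ℤ) + 1 := by push_cast; ring
        rw [he, zpow_add, Equiv.Perm.mul_apply, zpow_one]
      rw [h1]; exact ih _ (hNtuinv ξ hξ)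
  have hcancel1 : ∀ η : S, (G ^ (N : ℤ)) ((G ^ (-(N : ℤ))) η) = η := by
    intro η
    rw [← Equiv.Perm.mul_apply, ← zpow_add]
    simp
  have hcancel2 : ∀ η : S, (G ^ (-(N : ℤ))) ((G ^ (N : ℤ)) η) = η := by
    intro η
    rw [← Equiv.Perm.mul_apply, ← zpow_add]
    simp
  have key : ∀ ξ : S, mt (F ξ) - mt ξ =
      (1 / (2 * (N : ℝ))) * (m₀ ((G ^ (N : ℤ)) ξ) - m₀ ((G ^ (-(N : ℤ))) ξ)) := by
    intro ξ
    have hshift : ∀ k : ℕ, (G ^ ((k : ℤ) - N)) (F ξ) = (G ^ (((k + 1 : ℕ) : ℤ) - N)) ξ := by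
      intro k
      have he : (((k + 1 : ℕ) : ℤ) - N) = ((k : ℤ) - N) + 1 := by push_cast; ring
      rw [he, zpow_add, Equiv.Perm.mul_apply, zpow_one]
    rw [hmt, hmt, ← mul_sub, ← Finset.sum_sub_distrib]
    congr 1
    have htel := Finset.sum_range_sub (f := fun k : ℕ => m₀ ((G ^ ((k : ℤ) - N)) ξ)) (2 * N)
    calc ∑ k ∈ range (2 * N), (m₀ ((G ^ ((k : ℤ) - N)) (F ξ)) - m₀ ((G ^ ((k : ℤ) - N)) ξ))
        = ∑ k ∈ range (2 * N),
            (m₀ ((G ^ (((k + 1 : ℕ) : ℤ) - N)) ξ) - m₀ ((G ^ ((k : ℤ) - N)) ξ)) :=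
          Finset.sum_congr rfl fun k _ => by rw [hshift]
      _ = m₀ ((G ^ (((2 * N : ℕ) : ℤ) - N)) ξ) - m₀ ((G ^ (((0 : ℕ) : ℤ) - N)) ξ) := htel
      _ = m₀ ((G ^ (N : ℤ)) ξ) - m₀ ((G ^ (-(N : ℤ))) ξ) := by
          have e1 : ((2 * N : ℕ) : ℤ) - N = (N : ℤ) := by push_cast; ring
          have e2 : ((0 : ℕ) : ℤ) - N = -(N : ℤ) := by push_cast; ring
          rw [e1, e2]
  have hNpos : (0 : ℝ) < 2 * (N : ℝ) := by positivity
  have hnotNs : ∀ ξ : S, ξ ∉ Ns → m₀ ((G ^ (N : ℤ)) ξ) = u := by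
    intro ξ hξ
    rw [hNs] at hξ
    simp only [Set.mem_diff, Set.mem_univ, true_and, not_not] at hξ
    obtain ⟨η, hη, he⟩ := hξ
    rw [← he, hcancel1]
    exact hm₀u η hη
  have hnotNu : ∀ ξ : S, ξ ∉ Nu → m₀ ((G ^ (-(N : ℤ))) ξ) = s := by
    intro ξ hξ
    rw [hNu] at hξ
    simp only [Set.mem_diff, Set.mem_univ, true_and, not_not] at hξ
    obtain ⟨η, hη, he⟩ := hξ
    rw [← he, hcancel2]
    exact hm₀s η hη
  refine ⟨?_, ?_, ?_⟩
  · intro ξ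
    rw [key]
    have hcoef : (0 : ℝ) ≤ 1 / (2 * (N : ℝ)) := by positivity
    by_cases hξ : ξ ∈ Ns
    · have h1 : (G ^ (-(N : ℤ))) ξ ∈ Nts := hback N ξ (hNsSub hξ)
      have h2 : m₀ ((G ^ (-(N : ℤ))) ξ) = s := hm₀s _ h1
      have h3 : m₀ ((G ^ (N : ℤ)) ξ) ≤ s := (hm₀range _).2
      nlinarith
    · have h2 : m₀ ((G ^ (N : ℤ)) ξ) = u := hnotNs ξ hξ
      have h3 : u ≤ m₀ ((G ^ (-(N : ℤ))) ξ) := (hm₀range _).1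
      nlinarith
  · intro ξ hξ
    rw [Set.mem_union] at hξ
    push_neg at hξ
    rw [key, hnotNs ξ hξ.2, hnotNu ξ hξ.1]
    ring
  · apply div_neg_of_neg_of_pos
    · linarith
    · exact hNpos
end

section
/- Let E be a Banach space, F̂ = K̂ + R̂ with K̂ of finite rank, K̂R̂ = R̂K̂ = 0, spectral radius of R̂ less than ε, and K̂ written in Jordan form K̂ = Σᵢ (λᵢ Σⱼ vᵢⱼ ⊗ wᵢⱼ + Σⱼ vᵢⱼ ⊗ wᵢ,ⱼ₊₁) with wᵢⱼ(vₖₗ) = δᵢₖδⱼₗ. Then for every n ≥ 1 and every ψ ∈ E, ℓ ∈ E*, one has ℓ(F̂ⁿψ) = Σᵢ Σ_{k=0}^{min(n,dᵢ−1)} C(n,k) λᵢ^{n−k} Σ_{j=1}^{dᵢ−k} ℓ(vᵢⱼ) wᵢ,ⱼ₊ₖ(ψ) + O(εⁿ)‖ψ‖‖ℓ‖, where C(n,k) is the binomial coefficient. -/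
open Finset
open scoped Classical

/-- Norm bound from spectral radius: `‖R^n‖ ≤ C ε^n`. -/
lemma stmt10_aux_specbound
    {E : Type*} [NormedAddCommGroup E] [NormedSpace ℂ E] [CompleteSpace E]
    (R : E →L[ℂ] E) (ε : ℝ) (hε : 0 < ε) (hR : spectralRadius ℂ R < ENNReal.ofReal ε) :
    ∃ C : ℝ, 0 ≤ C ∧ ∀ n : ℕ, 1 ≤ n → ‖R ^ n‖ ≤ C * ε ^ n := by
  have hgel := spectrum.pow_norm_pow_one_div_tendsto_nhds_spectralRadius R
  have hev : ∀ᶠ n : ℕ in Filter.atTop,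
      ENNReal.ofReal (‖R ^ n‖ ^ (1 / n : ℝ)) < ENNReal.ofReal ε :=
    hgel.eventually_lt_const hR
  obtain ⟨N, hN⟩ := Filter.eventually_atTop.mp hev
  refine ⟨1 + ∑ m ∈ Finset.range (N + 1), ‖R ^ m‖ / ε ^ m, by positivity, ?_⟩
  intro n hn
  by_cases hcase : n ≤ N
  · have h1 : ‖R ^ n‖ / ε ^ n ≤ 1 + ∑ m ∈ Finset.range (N + 1), ‖R ^ m‖ / ε ^ m := by
      have : ‖R ^ n‖ / ε ^ n ≤ ∑ m ∈ Finset.range (N + 1), ‖R ^ m‖ / ε ^ m :=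
        Finset.single_le_sum (f := fun m => ‖R ^ m‖ / ε ^ m)
          (fun m _ => by positivity) (Finset.mem_range.mpr (by omega))
      linarith
    have hεn : (0:ℝ) < ε ^ n := by positivity
    calc ‖R ^ n‖ = (‖R ^ n‖ / ε ^ n) * ε ^ n := by field_simp
      _ ≤ (1 + ∑ m ∈ Finset.range (N + 1), ‖R ^ m‖ / ε ^ m) * ε ^ n :=
          mul_le_mul_of_nonneg_right h1 hεn.le
  · have hn' := hN n (by omega)
    rw [ENNReal.ofReal_lt_ofReal_iff hε] at hn'
    have hnn : (n : ℝ) ≠ 0 := Nat.cast_ne_zero.mpr (by omega)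
    have h0 : ‖R ^ n‖ = (‖R ^ n‖ ^ (1 / n : ℝ)) ^ n := by
      rw [← Real.rpow_natCast (‖R ^ n‖ ^ (1 / n : ℝ)) n, ← Real.rpow_mul (norm_nonneg _),
        one_div, inv_mul_cancel₀ hnn, Real.rpow_one]
    have hle : ‖R ^ n‖ ≤ ε ^ n := by
      rw [h0]
      exact pow_le_pow_left₀ (Real.rpow_nonneg (norm_nonneg _) _) hn'.le n
    nlinarith [pow_pos hε n, Finset.sum_nonneg
      (fun m (_ : m ∈ Finset.range (N+1)) => by positivity : ∀ m ∈ Finset.range (N+1), (0:ℝ) ≤ ‖R ^ m‖ / ε ^ m)]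

/-- (Asymptotic expansion of correlation functions, abstract form of
Theorem 2.)  Let `F̂ = K̂ + R̂` with `K̂R̂ = R̂K̂ = 0`, the spectral radius of `R̂` less than
`ε`, and `K̂` given in Jordan form `K̂ = ∑ᵢ (λᵢ ∑ⱼ vᵢⱼ ⊗ wᵢⱼ + ∑ⱼ vᵢⱼ ⊗ wᵢ,ⱼ₊₁)` with
`wᵢⱼ(vₖₗ) = δᵢₖδⱼₗ` (blocks of size `dᵢ`, `j` running from `0` to `dᵢ − 1`).  Then for every
`n ≥ 1`, `ψ ∈ E`, `ℓ ∈ E*`: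
`ℓ(F̂ⁿψ) = ∑ᵢ ∑_{k=0}^{min(n,dᵢ−1)} C(n,k) λᵢ^{n−k} ∑_{j=0}^{dᵢ−1−k} ℓ(vᵢⱼ) wᵢ,ⱼ₊ₖ(ψ) + O(εⁿ)‖ψ‖‖ℓ‖`. -/
theorem stmt10
    {E : Type*} [NormedAddCommGroup E] [NormedSpace ℂ E] [CompleteSpace E]
    (F K R : E →L[ℂ] E) (hFKR : F = K + R)
    (hKR : K ∘L R = 0) (hRK : R ∘L K = 0)
    (ε : ℝ) (hε : 0 < ε) (hR : spectralRadius ℂ R < ENNReal.ofReal ε)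
    {ι : Type*} [Fintype ι]
    (lam : ι → ℂ) (d : ι → ℕ) (hd : ∀ i, 0 < d i) (hlam : ∀ i, ε < ‖lam i‖)
    (v : ι → ℕ → E) (w : ι → ℕ → (E →L[ℂ] ℂ))
    (hdual : ∀ i j k l, j < d i → l < d k →
      w i j (v k l) = if i = k ∧ j = l then 1 else 0)
    (hK : ∀ ψ : E, K ψ = ∑ i : ι,
      (lam i • ∑ j ∈ Finset.range (d i), (w i j ψ) • v i j
        + ∑ j ∈ Finset.range (d i - 1), (w i (j + 1) ψ) • v i j)) :
    ∃ C : ℝ, ∀ (n : ℕ), 1 ≤ n → ∀ (ψ : E) (ℓ : E →L[ℂ] ℂ),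
      ‖ℓ ((F ^ n) ψ) -
          ∑ i : ι, ∑ k ∈ Finset.range (min n (d i - 1) + 1),
            (n.choose k : ℂ) * lam i ^ (n - k) *
              ∑ j ∈ Finset.range (d i - k), ℓ (v i j) * w i (j + k) ψ‖
        ≤ C * ε ^ n * ‖ψ‖ * ‖ℓ‖ := by
  classical
  obtain ⟨C, hC0, hCbound⟩ := stmt10_aux_specbound R ε hε hR
  -- the coefficient function
  set a : ℕ → ι → ℕ → E → ℂ := fun n i j ψ =>
    ∑ k ∈ Finset.range (n + 1), (n.choose k : ℂ) * lam i ^ (n - k) *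
      (if j + k < d i then w i (j + k) ψ else 0) with haDef
  -- vanishing beyond the block
  have az : ∀ n i j ψ, d i ≤ j → a n i j ψ = 0 := by
    intro n i j ψ hj
    refine Finset.sum_eq_zero fun k _ => ?_
    rw [if_neg (by omega), mul_zero]
  -- Pascal recursion
  have hrec : ∀ n i j ψ, a (n + 1) i j ψ = lam i * a n i j ψ + a n i (j + 1) ψ := by
    intro n i j ψ
    have hL : a (n + 1) i j ψ =
        (∑ k ∈ Finset.range (n + 1), (n.choose k : ℂ) * lam i ^ (n - k) *
          (if j + 1 + k < d i then w i (j + 1 + k) ψ else 0))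
        + ((∑ k ∈ Finset.range (n + 1), (n.choose (k + 1) : ℂ) * lam i ^ (n - k) *
          (if j + 1 + k < d i then w i (j + 1 + k) ψ else 0))
          + lam i ^ (n + 1) * (if j < d i then w i j ψ else 0)) := by
      simp only [haDef]
      rw [Finset.sum_range_succ' (fun k => ((n+1).choose k : ℂ) * lam i ^ (n + 1 - k) *
        (if j + k < d i then w i (j + k) ψ else 0)) (n + 1)]
      simp only [Nat.choose_zero_right, Nat.cast_one, one_mul, Nat.sub_zero, Nat.add_sub_cancel,
        Nat.choose_succ_succ, Nat.cast_add, add_zero]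
      rw [← add_assoc, ← Finset.sum_add_distrib]
      congr 1
      refine Finset.sum_congr rfl fun k hk => ?_
      have h1 : n + 1 - (k + 1) = n - k := by omega
      have h2 : j + (k + 1) = j + 1 + k := by omega
      rw [Nat.succ_eq_add_one, h1, h2]
      ring
    have hM : lam i * a n i j ψ =
        (∑ k ∈ Finset.range (n + 1), (n.choose (k + 1) : ℂ) * lam i ^ (n - k) *
          (if j + 1 + k < d i then w i (j + 1 + k) ψ else 0))
          + lam i ^ (n + 1) * (if j < d i then w i j ψ else 0) := by
      simp only [haDef]
      rw [Finset.mul_sum]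
      have : ∀ k ∈ Finset.range (n + 1),
          lam i * ((n.choose k : ℂ) * lam i ^ (n - k) *
            (if j + k < d i then w i (j + k) ψ else 0))
          = (n.choose k : ℂ) * lam i ^ (n + 1 - k) *
            (if j + k < d i then w i (j + k) ψ else 0) := by
        intro k hk
        have hk' : k ≤ n := Nat.lt_succ_iff.mp (Finset.mem_range.mp hk)
        have : lam i ^ (n + 1 - k) = lam i * lam i ^ (n - k) := by
          rw [← pow_succ']
          congr 1
          omega
        rw [this]; ring
      rw [Finset.sum_congr rfl this]
      rw [Finset.sum_range_succ' (fun k => (n.choose k : ℂ) * lam i ^ (n + 1 - k) *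
        (if j + k < d i then w i (j + k) ψ else 0)) n]
      have hlast : ∑ k ∈ Finset.range (n + 1), (n.choose (k + 1) : ℂ) * lam i ^ (n - k) *
          (if j + 1 + k < d i then w i (j + 1 + k) ψ else 0)
          = ∑ k ∈ Finset.range n, (n.choose (k + 1) : ℂ) * lam i ^ (n - k) *
          (if j + 1 + k < d i then w i (j + 1 + k) ψ else 0) := by
        rw [Finset.sum_range_succ, Nat.choose_succ_self]
        simp
      rw [hlast]
      congr 1
      · refine Finset.sum_congr rfl fun k hk => ?_
        have h1 : n + 1 - (k + 1) = n - k := by omega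
        have h2 : j + (k + 1) = j + 1 + k := by omega
        rw [h1, h2]
      · simp
    rw [hL, hM, haDef]
    ring
  -- K in coefficient form
  have hKform : ∀ φ : E, K φ = ∑ i : ι, ∑ j ∈ Finset.range (d i),
      (lam i * w i j φ + (if j + 1 < d i then w i (j + 1) φ else 0)) • v i j := by
    intro φ
    rw [hK φ]
    refine Finset.sum_congr rfl fun i _ => ?_
    rw [Finset.smul_sum]
    have h1 : ∑ j ∈ Finset.range (d i - 1), (w i (j + 1) φ) • v i j
        = ∑ j ∈ Finset.range (d i), (if j + 1 < d i then w i (j + 1) φ else 0) • v i j := by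
      have e1 : ∑ j ∈ Finset.range (d i - 1), (w i (j + 1) φ) • v i j
          = ∑ j ∈ Finset.range (d i - 1),
              (if j + 1 < d i then w i (j + 1) φ else 0) • v i j :=
        Finset.sum_congr rfl fun j hj => by
          rw [if_pos (by simp only [Finset.mem_range] at hj; omega)]
      rw [e1]
      exact Finset.sum_subset (Finset.range_subset_range.mpr (by omega : d i - 1 ≤ d i))
        (fun j _ hj => by
          rw [if_neg (by simp only [Finset.mem_range] at hj ⊢; omega), zero_smul])
    rw [h1, ← Finset.sum_add_distrib]
    refine Finset.sum_congr rfl fun j hj => ?_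
    rw [smul_smul, ← add_smul]
  -- evaluation of the duals on a coefficient combination
  have hw : ∀ (c : ι → ℕ → ℂ) (i : ι) (j : ℕ), j < d i →
      w i j (∑ k : ι, ∑ l ∈ Finset.range (d k), c k l • v k l) = c i j := by
    intro c i j hj
    rw [map_sum]
    have hterm : ∀ k : ι, w i j (∑ l ∈ Finset.range (d k), c k l • v k l)
        = if k = i then c i j else 0 := by
      intro k
      rw [map_sum]
      by_cases hk : k = i
      · subst hk
        rw [if_pos rfl, Finset.sum_eq_single j]
        · rw [map_smul, hdual k j k j hj hj, if_pos ⟨rfl, rfl⟩, smul_eq_mul, mul_one]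
        · intro l hl hne
          rw [map_smul, hdual k j k l hj (Finset.mem_range.mp hl),
            if_neg (by tauto), smul_eq_mul, mul_zero]
        · intro h; exact absurd (Finset.mem_range.mpr hj) h
      · rw [if_neg hk]
        refine Finset.sum_eq_zero fun l hl => ?_
        rw [map_smul, hdual i j k l hj (Finset.mem_range.mp hl),
          if_neg (by tauto), smul_eq_mul, mul_zero]
    rw [Finset.sum_congr rfl fun k _ => hterm k]
    simp
  -- iterated K formula
  have hKn : ∀ (ψ : E) (n : ℕ), 1 ≤ n →
      (K ^ n) ψ = ∑ i : ι, ∑ j ∈ Finset.range (d i), a n i j ψ • v i j := by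
    intro ψ n hn
    induction n with
    | zero => omega
    | succ m ih =>
      by_cases hm : m = 0
      · subst hm
        rw [pow_one, hKform ψ]
        refine Finset.sum_congr rfl fun i _ => Finset.sum_congr rfl fun j hj => ?_
        have hj' : j < d i := Finset.mem_range.mp hj
        congr 1
        simp only [haDef]
        rw [Finset.sum_range_succ, Finset.sum_range_one]
        norm_num
        intro h; exact absurd hj' (by omega)
      · have hm1 : 1 ≤ m := by omega
        have ihm := ih hm1
        rw [pow_succ', ContinuousLinearMap.mul_apply, ihm, hKform]
        refine Finset.sum_congr rfl fun i _ => Finset.sum_congr rfl fun j hj => ?_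
        have hj' : j < d i := Finset.mem_range.mp hj
        congr 1
        rw [hw (fun k l => a m k l ψ) i j hj']
        rw [hrec m i j ψ]
        by_cases hj1 : j + 1 < d i
        · rw [if_pos hj1, hw (fun k l => a m k l ψ) i (j + 1) hj1]
        · rw [if_neg hj1, az m i (j + 1) ψ (by omega), add_zero]
  -- the main algebraic identity for ℓ ∘ K^n
  have hmain : ∀ (ψ : E) (ℓ : E →L[ℂ] ℂ) (n : ℕ), 1 ≤ n →
      ℓ ((K ^ n) ψ) = ∑ i : ι, ∑ k ∈ Finset.range (min n (d i - 1) + 1),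
        (n.choose k : ℂ) * lam i ^ (n - k) *
          ∑ j ∈ Finset.range (d i - k), ℓ (v i j) * w i (j + k) ψ := by
    intro ψ ℓ n hn
    rw [hKn ψ n hn, map_sum]
    refine Finset.sum_congr rfl fun i _ => ?_
    rw [map_sum]
    have hLHS : ∑ j ∈ Finset.range (d i), ℓ (a n i j ψ • v i j)
        = ∑ k ∈ Finset.range (n + 1), ∑ j ∈ Finset.range (d i),
          (n.choose k : ℂ) * lam i ^ (n - k) *
            ((if j + k < d i then w i (j + k) ψ else 0) * ℓ (v i j)) := by
      rw [Finset.sum_comm]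
      refine Finset.sum_congr rfl fun j _ => ?_
      rw [map_smul, smul_eq_mul]
      simp only [haDef]
      rw [Finset.sum_mul]
      exact Finset.sum_congr rfl fun k _ => by ring
    rw [hLHS]
    have hRHS : ∀ k ∈ Finset.range (n + 1),
        (n.choose k : ℂ) * lam i ^ (n - k) *
          ∑ j ∈ Finset.range (d i - k), ℓ (v i j) * w i (j + k) ψ
        = ∑ j ∈ Finset.range (d i),
          (n.choose k : ℂ) * lam i ^ (n - k) *
            ((if j + k < d i then w i (j + k) ψ else 0) * ℓ (v i j)) := by
      intro k _
      rw [Finset.mul_sum]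
      have hsub : ∑ j ∈ Finset.range (d i - k),
          (n.choose k : ℂ) * lam i ^ (n - k) * (ℓ (v i j) * w i (j + k) ψ)
          = ∑ j ∈ Finset.range (d i),
            (n.choose k : ℂ) * lam i ^ (n - k) *
              ((if j + k < d i then w i (j + k) ψ else 0) * ℓ (v i j)) := by
        have e1 : ∑ j ∈ Finset.range (d i - k),
            (n.choose k : ℂ) * lam i ^ (n - k) * (ℓ (v i j) * w i (j + k) ψ)
            = ∑ j ∈ Finset.range (d i - k),
              (n.choose k : ℂ) * lam i ^ (n - k) *
                ((if j + k < d i then w i (j + k) ψ else 0) * ℓ (v i j)) :=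
          Finset.sum_congr rfl fun j hj => by
            simp only [Finset.mem_range] at hj
            rw [if_pos (by omega)]
            ring
        rw [e1]
        exact Finset.sum_subset (Finset.range_subset_range.mpr (by omega : d i - k ≤ d i))
          fun j _ hj => by
            simp only [Finset.mem_range] at hj
            rw [if_neg (by omega), zero_mul, mul_zero]
      rw [← hsub]
    rw [← Finset.sum_congr rfl hRHS]
    symm
    apply Finset.sum_subset (Finset.range_subset_range.mpr (by omega : min n (d i - 1) + 1 ≤ n + 1))
    intro k hk hk'
    simp only [Finset.mem_range] at hk hk'
    have : d i - k = 0 := by omega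
    rw [this]
    simp
  -- F^n = K^n + R^n
  have hKRn : ∀ m : ℕ, K ^ (m + 1) * R = 0 := by
    intro m
    rw [pow_succ, mul_assoc, show K * R = 0 from hKR, mul_zero]
  have hRKn : ∀ m : ℕ, R ^ (m + 1) * K = 0 := by
    intro m
    rw [pow_succ, mul_assoc, show R * K = 0 from hRK, mul_zero]
  have hFn : ∀ n : ℕ, 1 ≤ n → F ^ n = K ^ n + R ^ n := by
    intro n hn
    induction n with
    | zero => omega
    | succ m ih =>
      by_cases hm : m = 0
      · subst hm; simp [hFKR]
      · have hm1 : 1 ≤ m := by omega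
        obtain ⟨p, rfl⟩ : ∃ p, m = p + 1 := ⟨m - 1, by omega⟩
        rw [pow_succ, ih hm1, hFKR, add_mul, mul_add, mul_add, hKRn p, hRKn p,
          ← pow_succ, ← pow_succ]
        abel
  -- conclusion
  refine ⟨C, fun n hn ψ ℓ => ?_⟩
  have hsplit : ℓ ((F ^ n) ψ) -
      (∑ i : ι, ∑ k ∈ Finset.range (min n (d i - 1) + 1),
        (n.choose k : ℂ) * lam i ^ (n - k) *
          ∑ j ∈ Finset.range (d i - k), ℓ (v i j) * w i (j + k) ψ)
      = ℓ ((R ^ n) ψ) := by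
    rw [hFn n hn, ← hmain ψ ℓ n hn]
    simp [map_add]
  rw [hsplit]
  calc ‖ℓ ((R ^ n) ψ)‖ ≤ ‖ℓ‖ * ‖(R ^ n) ψ‖ := ℓ.le_opNorm _
    _ ≤ ‖ℓ‖ * (‖R ^ n‖ * ‖ψ‖) :=
        mul_le_mul_of_nonneg_left ((R ^ n).le_opNorm ψ) (norm_nonneg ℓ)
    _ ≤ ‖ℓ‖ * (C * ε ^ n * ‖ψ‖) := by
        have := hCbound n hn
        have h2 : ‖R ^ n‖ * ‖ψ‖ ≤ C * ε ^ n * ‖ψ‖ :=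
          mul_le_mul_of_nonneg_right this (norm_nonneg ψ)
        exact mul_le_mul_of_nonneg_left h2 (norm_nonneg ℓ)
    _ = C * ε ^ n * ‖ψ‖ * ‖ℓ‖ := by ring
end

section
/- Let H be a Hilbert space and p̂ a bounded operator such that (L² + ε)·Id − p̂*p̂ = b̂*b̂ − K̂ for some bounded b̂ and some operator K̂, and let (π_λ) be a family of orthogonal projections with ‖K̂(1 − π_λ)‖ → 0 as λ → ∞. Then for every δ > 0 there exists λ such that, setting p̂_δ := p̂(1 − π_λ) and K̂_δ := p̂ π_λ, one has p̂ = p̂_δ + K̂_δ with ‖p̂_δ‖² ≤ L² + ε + δ. -/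
open Filter ContinuousLinearMap

/-- (Abstract skeleton of the `L²`-continuity lemma.)  Let `p̂` be a
bounded operator on a Hilbert space with `(L² + ε)·Id − p̂*p̂ = b̂*b̂ − K̂`, and let `(π_λ)`
be a family of orthogonal projections with `‖K̂(1 − π_λ)‖ → 0` as `λ → ∞`.  Then for every
`δ > 0` there is `λ` such that, with `p̂_δ := p̂(1 − π_λ)` and `K̂_δ := p̂ π_λ`, one has
`p̂ = p̂_δ + K̂_δ` and `‖p̂_δ‖² ≤ L² + ε + δ`. -/
theorem stmt16
    {H : Type*} [NormedAddCommGroup H] [InnerProductSpace ℂ H] [CompleteSpace H]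
    (p b K : H →L[ℂ] H) (L ε : ℝ) (hε : 0 ≤ ε)
    (hsq : ((L ^ 2 + ε : ℝ) : ℂ) • (1 : H →L[ℂ] H) - (ContinuousLinearMap.adjoint p) ∘L p
      = (ContinuousLinearMap.adjoint b) ∘L b - K)
    (π : ℝ → (H →L[ℂ] H))
    (hπ_proj : ∀ lam : ℝ, IsIdempotentElem (π lam))
    (hπ_sa : ∀ lam : ℝ, ContinuousLinearMap.adjoint (π lam) = π lam)
    (hK : Tendsto (fun lam : ℝ => ‖K ∘L ((1 : H →L[ℂ] H) - π lam)‖) atTop (nhds 0)) :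
    ∀ δ : ℝ, 0 < δ → ∃ lam : ℝ,
      p = p ∘L ((1 : H →L[ℂ] H) - π lam) + p ∘L (π lam) ∧
      ‖p ∘L ((1 : H →L[ℂ] H) - π lam)‖ ^ 2 ≤ L ^ 2 + ε + δ := by
  intro δ hδ
  obtain ⟨lam, hlam⟩ := (hK.eventually (gt_mem_nhds hδ)).exists
  refine ⟨lam, by ext u; simp, ?_⟩
  set Q : H →L[ℂ] H := (1 : H →L[ℂ] H) - π lam with hQ
  have hQsa : ContinuousLinearMap.adjoint Q = Q := by
    have h1 : ContinuousLinearMap.adjoint (1 : H →L[ℂ] H) = 1 := by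
      rw [← ContinuousLinearMap.star_eq_adjoint]; exact star_one _
    simp [hQ, map_sub, hπ_sa lam, h1]
  have hQidem : Q ∘L Q = Q := by
    ext u
    have := congrArg (fun T : H →L[ℂ] H => T u) (hπ_proj lam)
    simp only [mul_def, comp_apply] at this ⊢
    simp [hQ, sub_apply, one_apply, this, map_sub]
  have hQQ : ∀ u : H, Q (Q u) = Q u := by
    intro u
    have := congrArg (fun T : H →L[ℂ] H => T u) hQidem
    simpa using this
  have hQle : ∀ u : H, ‖Q u‖ ≤ ‖u‖ := by
    intro u
    have h1 : (inner ℂ (Q u) (Q u) : ℂ) = inner ℂ u (Q u) := by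
      calc (inner ℂ (Q u) (Q u) : ℂ) = inner ℂ u (ContinuousLinearMap.adjoint Q (Q u)) := by
            rw [adjoint_inner_right]
        _ = inner ℂ u (Q u) := by rw [hQsa, hQQ]
    have h2 : ‖Q u‖ ^ 2 = (inner ℂ (Q u) (Q u) : ℂ).re := by
      rw [inner_self_eq_norm_sq_to_K (𝕜 := ℂ)]; norm_cast
    have h3 : (inner ℂ u (Q u) : ℂ).re ≤ ‖u‖ * ‖Q u‖ := re_inner_le_norm (𝕜 := ℂ) u (Q u)
    nlinarith [norm_nonneg (Q u), norm_nonneg u, h2, h1 ▸ h2]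
  have hpp : ContinuousLinearMap.adjoint p ∘L p
      = ((L ^ 2 + ε : ℝ) : ℂ) • (1 : H →L[ℂ] H)
        - ContinuousLinearMap.adjoint b ∘L b + K := by
    have h1 : ((L ^ 2 + ε : ℝ) : ℂ) • (1 : H →L[ℂ] H)
        = (ContinuousLinearMap.adjoint b ∘L b - K) + ContinuousLinearMap.adjoint p ∘L p :=
      sub_eq_iff_eq_add.mp hsq
    calc ContinuousLinearMap.adjoint p ∘L p
        = (ContinuousLinearMap.adjoint b ∘L b - K) + ContinuousLinearMap.adjoint p ∘L p
          - (ContinuousLinearMap.adjoint b ∘L b - K) := by abel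
      _ = ((L ^ 2 + ε : ℝ) : ℂ) • (1 : H →L[ℂ] H)
          - (ContinuousLinearMap.adjoint b ∘L b - K) := by rw [← h1]
      _ = _ := by abel
  set M : ℝ := L ^ 2 + ε + δ with hM
  have hM0 : 0 ≤ M := by positivity
  have key : ∀ u : H, ‖p (Q u)‖ ^ 2 ≤ M * ‖u‖ ^ 2 := by
    intro u
    set v := Q u with hv
    have h1 : (inner ℂ (p v) (p v) : ℂ)
        = ((L ^ 2 + ε : ℝ) : ℂ) * inner ℂ v v - inner ℂ (b v) (b v) + inner ℂ (K v) v := by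
      calc (inner ℂ (p v) (p v) : ℂ)
          = inner ℂ ((ContinuousLinearMap.adjoint p ∘L p) v) v := by
            rw [comp_apply, adjoint_inner_left]
        _ = _ := by
            rw [hpp]
            simp only [add_apply, sub_apply, comp_apply, smul_apply, one_apply]
            rw [inner_add_left, inner_sub_left, inner_smul_left, Complex.conj_ofReal,
              adjoint_inner_left]
            rfl
    have hre : ‖p v‖ ^ 2
        = (L ^ 2 + ε) * ‖v‖ ^ 2 - ‖b v‖ ^ 2 + (inner ℂ (K v) v : ℂ).re := by
      have e1 : (inner ℂ (p v) (p v) : ℂ).re = ‖p v‖ ^ 2 := by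
        rw [inner_self_eq_norm_sq_to_K (𝕜 := ℂ)]; norm_cast
      have e2 : (inner ℂ v v : ℂ).re = ‖v‖ ^ 2 := by
        rw [inner_self_eq_norm_sq_to_K (𝕜 := ℂ)]; norm_cast
      have e3 : (inner ℂ (b v) (b v) : ℂ).re = ‖b v‖ ^ 2 := by
        rw [inner_self_eq_norm_sq_to_K (𝕜 := ℂ)]; norm_cast
      have := congrArg Complex.re h1
      simp only [Complex.add_re, Complex.sub_re, Complex.mul_re, Complex.ofReal_re,
        Complex.ofReal_im, inner_self_im, mul_zero, zero_mul, sub_zero] at this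
      rw [e1] at this; rw [this, e2, e3]
    have hKv : ‖K v‖ ≤ ‖K ∘L Q‖ * ‖u‖ := by
      have hc : K v = (K ∘L Q) u := by rw [hv, comp_apply]
      rw [hc]; exact le_opNorm _ _
    have hKre : (inner ℂ (K v) v : ℂ).re ≤ δ * ‖u‖ ^ 2 := by
      calc (inner ℂ (K v) v : ℂ).re ≤ ‖K v‖ * ‖v‖ := re_inner_le_norm (𝕜 := ℂ) _ _
        _ ≤ (‖K ∘L Q‖ * ‖u‖) * ‖u‖ :=
            mul_le_mul hKv (hQle u) (norm_nonneg _) (by positivity)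
        _ ≤ δ * ‖u‖ ^ 2 := by nlinarith [norm_nonneg u, hlam]
    have hvle := hQle u
    have hL2 : (0:ℝ) ≤ L ^ 2 + ε := by positivity
    nlinarith [sq_nonneg (‖b v‖), norm_nonneg v, norm_nonneg u,
      mul_le_mul hvle hvle (norm_nonneg _) (norm_nonneg _)]
  have hnorm : ‖p ∘L Q‖ ≤ Real.sqrt M := by
    refine opNorm_le_bound _ (Real.sqrt_nonneg M) fun u => ?_
    have hc : (p ∘L Q) u = p (Q u) := rfl
    rw [hc]
    calc ‖p (Q u)‖ = Real.sqrt (‖p (Q u)‖ ^ 2) := (Real.sqrt_sq (norm_nonneg _)).symm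
      _ ≤ Real.sqrt (M * ‖u‖ ^ 2) := Real.sqrt_le_sqrt (key u)
      _ = Real.sqrt M * ‖u‖ := by
          rw [Real.sqrt_mul hM0, Real.sqrt_sq (norm_nonneg _)]
  calc ‖p ∘L Q‖ ^ 2 ≤ Real.sqrt M ^ 2 := by
        have := pow_le_pow_left₀ (norm_nonneg _) hnorm 2
        exact this
    _ = M := Real.sq_sqrt hM0
end
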